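/- arXiv:2509.05897 — 2 statements merged into one kernel-verified Lean document; each statement's English description precedes it below -/
import Mathlib

section
/- The series ∑_{n=0}^∞ (1/4)^n · ((1/2)_n)^3 / (n!)^3 · (6n+1) converges and equals 4/π, where (x)_n denotes the Pochhammer symbol. -/
noncomputable def poch (x : ℝ) (n : ℕ) : ℝ := ∏ k ∈ Finset.range n, (x + k)

namespace RamAux

open Finset Filter Topology Real

lemma poch_zero (x : ℝ) : poch x 0 = 1 := by simp [poch]

lemma poch_succ (x : ℝ) (n : ℕ) : poch x (n+1) = poch x n * (x + n) := by
  simp [poch, Finset.prod_range_succ]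

lemma poch_succ' (x : ℝ) (n : ℕ) : poch x (n+1) = x * poch (x+1) n := by
  rw [poch, poch, Finset.prod_range_succ']
  simp only [Nat.cast_zero, add_zero]
  rw [mul_comm]
  congr 1
  apply Finset.prod_congr rfl
  intro i _
  push_cast
  ring

lemma poch_pos {x : ℝ} (hx : 0 < x) (n : ℕ) : 0 < poch x n := by
  apply Finset.prod_pos
  intro i _
  positivity

lemma poch_one (n : ℕ) : poch 1 n = n.factorial := by
  induction n with
  | zero => simp [poch_zero]
  | succ n ih =>
    rw [poch_succ, ih, Nat.factorial_succ]
    push_cast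
    ring

lemma poch_base_succ (x : ℝ) (hx : x ≠ 0) (n : ℕ) :
    poch (x+1) n = poch x n * (x + n) / x := by
  have h1 := poch_succ x n
  have h2 := poch_succ' x n
  field_simp
  rw [← h1, h2]

lemma poch_half_le (n : ℕ) : poch (1/2) n ≤ n.factorial := by
  induction n with
  | zero => simp [poch_zero]
  | succ n ih =>
    rw [poch_succ, Nat.factorial_succ]
    push_cast
    have h1 : (0:ℝ) < poch (1/2) n := poch_pos (by norm_num) n
    have h2 : (1/2 : ℝ) + n ≤ (n:ℝ) + 1 := by linarith
    calc poch (1/2) n * (1/2 + (n:ℝ)) ≤ (n.factorial : ℝ) * ((n:ℝ)+1) := by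
          apply mul_le_mul ih h2 (by linarith) (by positivity)
      _ = ((n:ℝ)+1) * n.factorial := by ring

lemma factorial_le_poch (c : ℝ) (hc : 0 ≤ c) (n : ℕ) :
    (n.factorial : ℝ) ≤ poch (c+1) n := by
  induction n with
  | zero => simp [poch_zero]
  | succ n ih =>
    rw [poch_succ, Nat.factorial_succ]
    push_cast
    have h1 : (0:ℝ) ≤ (n.factorial : ℝ) := by positivity
    have h2 : ((n:ℝ)+1) ≤ c + 1 + n := by linarith
    calc ((n:ℝ)+1) * n.factorial ≤ poch (c+1) n * (c+1+(n:ℝ)) := by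
          rw [mul_comm]
          apply mul_le_mul ih h2 (by linarith) ((poch_pos (by linarith) n).le)
      _ = poch (c+1) n * (c+1+(n:ℝ)) := rfl

noncomputable def Wc (k : ℕ) : ℝ := poch (1/2) k / k.factorial

lemma Wc_pos (k : ℕ) : 0 < Wc k := by
  have h1 := poch_pos (show (0:ℝ) < 1/2 by norm_num) k
  have h2 : (0:ℝ) < k.factorial := by positivity
  unfold Wc
  positivity

lemma Wc_le_one (k : ℕ) : Wc k ≤ 1 := by
  unfold Wc
  rw [div_le_one (by positivity)]
  exact poch_half_le k

lemma Wc_succ (k : ℕ) : Wc (k+1) = Wc k * ((k + 1/2) / (k+1)) := by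
  unfold Wc
  rw [poch_succ, Nat.factorial_succ]
  push_cast
  have h1 : (k.factorial : ℝ) ≠ 0 := by positivity
  field_simp
  ring

noncomputable def Bb (n k : ℕ) : ℝ :=
  (1/4)^n * (poch (1/2) n)^3 / ((n.factorial : ℝ) * (poch ((k:ℝ)+1) n)^2) * (Wc k)^2

lemma Bb_pos (n k : ℕ) : 0 < Bb n k := by
  have h1 := poch_pos (show (0:ℝ) < 1/2 by norm_num) n
  have h2 := poch_pos (show (0:ℝ) < (k:ℝ)+1 by positivity) n
  have h3 : (0:ℝ) < n.factorial := by positivity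
  have h4 := Wc_pos k
  unfold Bb
  positivity

lemma Bb_zero_right (n : ℕ) :
    Bb n 0 = (1/4)^n * (poch (1/2) n)^3 / (n.factorial : ℝ)^3 := by
  unfold Bb Wc
  simp only [Nat.cast_zero, zero_add, poch_one, poch_zero, Nat.factorial_zero]
  have h : ((n.factorial:ℝ) * (n.factorial:ℝ)^2) = (n.factorial:ℝ)^3 := by ring
  rw [h]
  norm_num

lemma Bb_zero_left (k : ℕ) : Bb 0 k = (Wc k)^2 := by
  unfold Bb
  simp [poch_zero]

lemma Bb_succ_right (n k : ℕ) :
    Bb n (k+1) = Bb n k * (((k:ℝ) + 1/2)^2 / ((k:ℝ)+(n:ℝ)+1)^2) := by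
  unfold Bb
  rw [Wc_succ]
  have hb : poch ((k:ℝ)+1+1) n = poch ((k:ℝ)+1) n * ((k:ℝ)+1+n) / ((k:ℝ)+1) :=
    poch_base_succ _ (by positivity) n
  have hcast : ((k+1 : ℕ) : ℝ) + 1 = (k:ℝ) + 1 + 1 := by push_cast; ring
  rw [hcast, hb]
  have h1 : (0:ℝ) < poch ((k:ℝ)+1) n := poch_pos (by positivity) n
  have h2 : (0:ℝ) < n.factorial := by positivity
  have h3 : ((k:ℝ)+1) ≠ 0 := by positivity
  have h4 : ((k:ℝ)+1+(n:ℝ)) ≠ 0 := by positivity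
  have h5 : ((k:ℝ)+(n:ℝ)+1) ≠ 0 := by positivity
  field_simp
  ring

lemma Bb_succ_left (n k : ℕ) :
    Bb (n+1) k = Bb n k * (((n:ℝ)+1/2)^3 / (4*((n:ℝ)+1)*((k:ℝ)+(n:ℝ)+1)^2)) := by
  unfold Bb
  rw [poch_succ, poch_succ, Nat.factorial_succ]
  push_cast
  have h1 : (0:ℝ) < poch ((k:ℝ)+1) n := poch_pos (by positivity) n
  have h2 : (0:ℝ) < n.factorial := by positivity
  have h3 : ((k:ℝ)+1+(n:ℝ)) ≠ 0 := by positivity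
  have h4 : ((n:ℝ)+1) ≠ 0 := by positivity
  have h5 : ((k:ℝ)+(n:ℝ)+1) ≠ 0 := by positivity
  field_simp
  ring

noncomputable def Ff (n k : ℕ) : ℝ := (6*(n:ℝ) + 4*(k:ℝ) + 1) * Bb n k

lemma Ff_nonneg (n k : ℕ) : 0 ≤ Ff n k := by
  have := Bb_pos n k
  unfold Ff
  positivity

lemma key (n k : ℕ) :
    Ff n (k+1) - Ff n k = 8*((n:ℝ)+1) * Bb (n+1) k - 8*(n:ℝ) * Bb n k := by
  unfold Ff
  rw [Bb_succ_right, Bb_succ_left]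
  have h4 : ((n:ℝ)+1) ≠ 0 := by positivity
  have h5 : ((k:ℝ)+(n:ℝ)+1) ≠ 0 := by positivity
  push_cast
  field_simp
  ring

lemma Bb_le (n k : ℕ) : Bb n k ≤ (1/4)^n := by
  unfold Bb
  have h1 := poch_pos (show (0:ℝ) < 1/2 by norm_num) n
  have h2 := poch_pos (show (0:ℝ) < (k:ℝ)+1 by positivity) n
  have h3 : (0:ℝ) < n.factorial := by positivity
  have hple : poch (1/2) n ≤ (n.factorial : ℝ) := poch_half_le n
  have hqge : (n.factorial : ℝ) ≤ poch ((k:ℝ)+1) n := factorial_le_poch _ (by positivity) n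
  have hW : (Wc k)^2 ≤ 1 := by
    have := Wc_pos k
    nlinarith [Wc_le_one k]
  calc (1/4:ℝ)^n * (poch (1/2) n)^3 / ((n.factorial : ℝ) * (poch ((k:ℝ)+1) n)^2) * (Wc k)^2
      ≤ (1/4:ℝ)^n * ((n.factorial:ℝ))^3 / ((n.factorial : ℝ) * ((n.factorial:ℝ))^2) * 1 := by
        apply mul_le_mul _ hW (by positivity) (by positivity)
        apply div_le_div₀ (by positivity) _ (by positivity) _
        · gcongr
        · gcongr
    _ = (1/4:ℝ)^n := by
        have h : ((n.factorial:ℝ) * (n.factorial:ℝ)^2) = (n.factorial:ℝ)^3 := by ring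
        rw [h, mul_one, mul_div_assoc, div_self (by positivity), mul_one]

lemma summable_majorant (a b : ℝ) : Summable (fun n : ℕ => (a*(n:ℝ) + b) * (1/4)^n) := by
  have h1 : Summable (fun n : ℕ => (n:ℝ) * (1/4:ℝ)^n) := by
    have := summable_pow_mul_geometric_of_norm_lt_one (R := ℝ) 1 (r := 1/4) (by norm_num)
    simpa using this
  have h2 : Summable (fun n : ℕ => (1/4:ℝ)^n) :=
    summable_geometric_of_lt_one (by norm_num) (by norm_num)
  have := (h1.mul_left a).add (h2.mul_left b)
  apply this.congr
  intro n
  ring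

lemma summable_cubic : Summable (fun n : ℕ => (6*(n:ℝ)+11) * ((n:ℝ)+1)^2 * (1/4:ℝ)^(n+1)) := by
  have hp : ∀ j : ℕ, Summable (fun n : ℕ => ((n:ℝ))^j * (1/4:ℝ)^n) := fun j =>
    summable_pow_mul_geometric_of_norm_lt_one (R := ℝ) j (r := 1/4) (by norm_num)
  have h3 := (hp 3).mul_left (3/2)
  have h2 := (hp 2).mul_left (23/4)
  have h1 := (hp 1).mul_left (7)
  have h0 := (hp 0).mul_left (11/4)
  have := ((h3.add h2).add h1).add h0
  apply this.congr
  intro n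
  ring

lemma summable_Ff (k : ℕ) : Summable (fun n => Ff n k) := by
  refine Summable.of_nonneg_of_le (fun n => Ff_nonneg n k) (fun n => ?_)
    (summable_majorant 6 (4*(k:ℝ)+1))
  unfold Ff
  have hb := Bb_le n k
  have hpos : (0:ℝ) ≤ 6*(n:ℝ) + 4*(k:ℝ) + 1 := by positivity
  calc (6*(n:ℝ) + 4*(k:ℝ) + 1) * Bb n k ≤ (6*(n:ℝ) + 4*(k:ℝ) + 1) * (1/4)^n :=
        mul_le_mul_of_nonneg_left hb hpos
    _ = (6*(n:ℝ) + (4*(k:ℝ)+1)) * (1/4)^n := by ring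

lemma tendsto_boundary (k : ℕ) :
    Tendsto (fun N : ℕ => 8*(N:ℝ) * Bb N k) atTop (𝓝 0) := by
  apply squeeze_zero (fun N => by have := (Bb_pos N k).le; positivity)
    (g := fun N : ℕ => (8*(N:ℝ) + 0) * (1/4)^N)
  · intro N
    have hb := Bb_le N k
    have h8 : (0:ℝ) ≤ 8*(N:ℝ) := by positivity
    calc 8*(N:ℝ) * Bb N k ≤ 8*(N:ℝ) * (1/4)^N := mul_le_mul_of_nonneg_left hb h8
      _ = (8*(N:ℝ) + 0) * (1/4)^N := by ring
  · exact (summable_majorant 8 0).tendsto_atTop_zero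

lemma tsum_succ_eq (k : ℕ) : ∑' n, Ff n (k+1) = ∑' n, Ff n k := by
  have hs1 := summable_Ff (k+1)
  have hs0 := summable_Ff k
  have hd : Summable (fun n => Ff n (k+1) - Ff n k) := hs1.sub hs0
  have hzero : HasSum (fun n => Ff n (k+1) - Ff n k) 0 := by
    rw [hd.hasSum_iff_tendsto_nat]
    have hps : ∀ N : ℕ, ∑ n ∈ Finset.range N, (Ff n (k+1) - Ff n k)
        = 8*(N:ℝ) * Bb N k := by
      intro N
      calc ∑ n ∈ Finset.range N, (Ff n (k+1) - Ff n k)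
          = ∑ n ∈ Finset.range N, ((fun m : ℕ => 8*(m:ℝ) * Bb m k) (n+1)
              - (fun m : ℕ => 8*(m:ℝ) * Bb m k) n) := by
            apply Finset.sum_congr rfl
            intro n _
            simpa using key n k
        _ = 8*(N:ℝ) * Bb N k - 8*(0:ℝ) * Bb 0 k := by
            simpa using Finset.sum_range_sub (f := fun m : ℕ => 8*(m:ℝ) * Bb m k) N
        _ = 8*(N:ℝ) * Bb N k := by norm_num
    simp only [hps]
    exact tendsto_boundary k
  have h0 : ∑' n, (Ff n (k+1) - Ff n k) = 0 := hzero.tsum_eq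
  have hsub := Summable.tsum_sub hs1 hs0
  rw [h0] at hsub
  linarith

lemma tsum_const_k (k : ℕ) : ∑' n, Ff n k = ∑' n, Ff n 0 := by
  induction k with
  | zero => rfl
  | succ k ih => rw [tsum_succ_eq k, ih]

lemma wallis_limit :
    Tendsto (fun k : ℕ => (2*(k:ℝ)+1) * (Wc k)^2) atTop (𝓝 (2/π)) := by
  have hW := Real.tendsto_prod_pi_div_two
  have hid : ∀ k : ℕ, (∏ i ∈ Finset.range k,
      ((2:ℝ)*i+2)/(2*i+1) * ((2*i+2)/(2*i+3))) = 1 / ((2*(k:ℝ)+1) * (Wc k)^2) := by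
    intro k
    induction k with
    | zero => simp [Wc, poch_zero]
    | succ k ih =>
      rw [Finset.prod_range_succ, ih, Wc_succ]
      have h1 : ((2:ℝ)*k+1) ≠ 0 := by positivity
      have h2 : ((2:ℝ)*k+2) ≠ 0 := by positivity
      have h3 : ((2:ℝ)*k+3) ≠ 0 := by positivity
      have h4 : ((k:ℝ)+1) ≠ 0 := by positivity
      have h5 : Wc k ≠ 0 := (Wc_pos k).ne'
      push_cast
      field_simp
      ring
  have h2 : Tendsto (fun k : ℕ => 1 / ((2*(k:ℝ)+1) * (Wc k)^2)) atTop (𝓝 (π/2)) := by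
    apply hW.congr
    intro k
    exact hid k
  have hpi : (π/2 : ℝ) ≠ 0 := by
    have := Real.pi_pos
    positivity
  have h3 := h2.inv₀ hpi
  simp only [one_div, inv_inv] at h3
  convert h3 using 2
  rw [inv_div]

lemma head_limit :
    Tendsto (fun k : ℕ => Ff 0 k) atTop (𝓝 (4/π)) := by
  have h1 := wallis_limit
  have hWc0 : Tendsto (fun k : ℕ => (Wc k)^2) atTop (𝓝 0) := by
    apply squeeze_zero (fun k => by have := Wc_pos k; positivity)
      (g := fun k : ℕ => (2*(k:ℝ)+1) * (Wc k)^2 * (1/((k:ℝ)+1)))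
    · intro k
      have hw : (0:ℝ) < (Wc k)^2 := by have := Wc_pos k; positivity
      rw [mul_one_div, le_div_iff₀ (by positivity)]
      nlinarith
    · have := h1.mul tendsto_one_div_add_atTop_nhds_zero_nat
      simpa using this
  have hcomb : Tendsto (fun k : ℕ => 2 * ((2*(k:ℝ)+1) * (Wc k)^2) - (Wc k)^2) atTop
      (𝓝 (2 * (2/π) - 0)) := (h1.const_mul 2).sub hWc0
  have h4 : (2 : ℝ) * (2/π) - 0 = 4/π := by ring
  rw [h4] at hcomb
  apply hcomb.congr
  intro k
  unfold Ff
  rw [Bb_zero_left]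
  push_cast
  ring

lemma Bb_succ_le (n k : ℕ) :
    Bb (n+1) k ≤ (1/4)^(n+1) * ((n:ℝ)+1)^2 / ((k:ℝ)+1)^2 := by
  unfold Bb
  have h1 := poch_pos (show (0:ℝ) < 1/2 by norm_num) (n+1)
  have h3 : (0:ℝ) < (n+1).factorial := by positivity
  have hnf : (0:ℝ) < n.factorial := by positivity
  have hple : poch (1/2) (n+1) ≤ ((n+1).factorial : ℝ) := poch_half_le (n+1)
  have hqge : ((k:ℝ)+1) * (n.factorial : ℝ) ≤ poch ((k:ℝ)+1) (n+1) := by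
    rw [poch_succ']
    have hin : (n.factorial : ℝ) ≤ poch ((k:ℝ)+1+1) n :=
      factorial_le_poch ((k:ℝ)+1) (by positivity) n
    have hk : (0:ℝ) < (k:ℝ)+1 := by positivity
    nlinarith
  have h2 : (0:ℝ) < poch ((k:ℝ)+1) (n+1) := poch_pos (by positivity) (n+1)
  have hW : (Wc k)^2 ≤ 1 := by
    have := Wc_pos k
    nlinarith [Wc_le_one k]
  have hkf : (0:ℝ) < ((k:ℝ)+1) * (n.factorial : ℝ) := by positivity
  calc (1/4:ℝ)^(n+1) * (poch (1/2) (n+1))^3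
        / (((n+1).factorial : ℝ) * (poch ((k:ℝ)+1) (n+1))^2) * (Wc k)^2
      ≤ (1/4:ℝ)^(n+1) * (((n+1).factorial:ℝ))^3
        / (((n+1).factorial : ℝ) * (((k:ℝ)+1) * (n.factorial:ℝ))^2) * 1 := by
        apply mul_le_mul _ hW (by positivity) (by positivity)
        apply div_le_div₀ (by positivity) _ (by positivity) _
        · gcongr
        · gcongr
    _ = (1/4:ℝ)^(n+1) * (((n+1).factorial:ℝ)/(n.factorial:ℝ))^2 / ((k:ℝ)+1)^2 := by
        field_simp
    _ = (1/4:ℝ)^(n+1) * ((n:ℝ)+1)^2 / ((k:ℝ)+1)^2 := by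
        have hx : ((((n:ℝ)+1) * (n.factorial:ℝ))/(n.factorial:ℝ))^2 = ((n:ℝ)+1)^2 := by
          rw [mul_div_assoc, div_self hnf.ne', mul_one]
        rw [Nat.factorial_succ]
        push_cast
        rw [hx]

lemma Ff_succ_le (n k : ℕ) :
    Ff (n+1) k ≤ ((6*(n:ℝ)+11) * ((n:ℝ)+1)^2 * (1/4)^(n+1)) / ((k:ℝ)+1) := by
  unfold Ff
  have hb := Bb_succ_le n k
  have hBpos := (Bb_pos (n+1) k).le
  have hnum : (0:ℝ) ≤ 6*((n+1:ℕ):ℝ) + 4*(k:ℝ) + 1 := by positivity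
  have hcoef : 6*((n+1:ℕ):ℝ) + 4*(k:ℝ) + 1 ≤ (6*(n:ℝ)+11) * ((k:ℝ)+1) := by
    push_cast
    nlinarith [Nat.cast_nonneg (α := ℝ) n, Nat.cast_nonneg (α := ℝ) k]
  have hk1 : (0:ℝ) < (k:ℝ)+1 := by positivity
  calc (6*((n+1:ℕ):ℝ) + 4*(k:ℝ) + 1) * Bb (n+1) k
      ≤ ((6*(n:ℝ)+11) * ((k:ℝ)+1)) * ((1/4)^(n+1) * ((n:ℝ)+1)^2 / ((k:ℝ)+1)^2) := by
        apply mul_le_mul hcoef hb hBpos (by positivity)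
    _ = ((6*(n:ℝ)+11) * ((n:ℝ)+1)^2 * (1/4)^(n+1)) / ((k:ℝ)+1) := by
        field_simp

lemma tail_limit :
    Tendsto (fun k : ℕ => ∑' n, Ff (n+1) k) atTop (𝓝 0) := by
  set D : ℝ := ∑' n : ℕ, (6*(n:ℝ)+11) * ((n:ℝ)+1)^2 * (1/4:ℝ)^(n+1) with hD
  apply squeeze_zero
    (fun k => tsum_nonneg (fun n => Ff_nonneg (n+1) k))
    (g := fun k : ℕ => D * (1/((k:ℝ)+1)))
  · intro k
    have hsl : Summable (fun n => Ff (n+1) k) := (summable_nat_add_iff 1).mpr (summable_Ff k)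
    have hsr : Summable (fun n : ℕ =>
        ((6*(n:ℝ)+11) * ((n:ℝ)+1)^2 * (1/4:ℝ)^(n+1)) / ((k:ℝ)+1)) :=
      summable_cubic.div_const _
    have hle := Summable.tsum_le_tsum (fun n => Ff_succ_le n k) hsl hsr
    calc ∑' n, Ff (n+1) k
        ≤ ∑' n : ℕ, ((6*(n:ℝ)+11) * ((n:ℝ)+1)^2 * (1/4:ℝ)^(n+1)) / ((k:ℝ)+1) := hle
      _ = D * (1/((k:ℝ)+1)) := by
          rw [tsum_div_const]
          rw [div_eq_mul_one_div]
  · have := tendsto_one_div_add_atTop_nhds_zero_nat.const_mul D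
    simpa using this

lemma sum_limit :
    Tendsto (fun k : ℕ => ∑' n, Ff n k) atTop (𝓝 (4/π)) := by
  have hsplit : ∀ k : ℕ, ∑' n, Ff n k = Ff 0 k + ∑' n, Ff (n+1) k := fun k =>
    Summable.tsum_eq_zero_add (summable_Ff k)
  have := head_limit.add tail_limit
  rw [add_zero] at this
  apply this.congr
  intro k
  exact (hsplit k).symm

theorem main : HasSum (fun n : ℕ => Ff n 0) (4 / π) := by
  have hconst : (fun k : ℕ => ∑' n, Ff n k) = (fun _ : ℕ => ∑' n, Ff n 0) := by
    funext k
    exact tsum_const_k k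
  have h1 : Tendsto (fun _ : ℕ => ∑' n, Ff n 0) atTop (𝓝 (∑' n, Ff n 0)) :=
    tendsto_const_nhds
  have h2 : Tendsto (fun _ : ℕ => ∑' n, Ff n 0) atTop (𝓝 (4/π)) := by
    rw [← hconst]
    exact sum_limit
  have heq : ∑' n, Ff n 0 = 4/π := tendsto_nhds_unique h1 h2
  have := (summable_Ff 0).hasSum
  rwa [heq] at this

end RamAux

theorem ramanujan_rate_quarter :
    HasSum (fun n : ℕ => (1/4 : ℝ)^n * (poch (1/2) n)^3 / (n.factorial : ℝ)^3 * (6*n + 1))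
      (4 / Real.pi) := by
  have hfun : (fun n : ℕ => (1/4 : ℝ)^n * (poch (1/2) n)^3 / (n.factorial : ℝ)^3 * (6*n + 1))
      = fun n => RamAux.Ff n 0 := by
    funext n
    simp only [RamAux.Ff, RamAux.Bb_zero_right]
    push_cast
    ring
  rw [hfun]
  exact RamAux.main
end

section
/- For real q with 0 < q < 1, the series ∑_{n=0}^∞ (-1)^n q^{n²} · [4n+1]_q · (q;q²)_n³ / (q²;q²)_n³ converges and equals (q;q²)_∞ (q³;q²)_∞ / ((q²;q²)_∞)². -/
noncomputable def qPoch (a q : ℝ) (n : ℕ) : ℝ := ∏ k ∈ Finset.range n, (1 - a * q^k)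

noncomputable def qPochInf (a q : ℝ) : ℝ := ∏' k : ℕ, (1 - a * q^k)

open Finset Filter Topology

namespace GZ

noncomputable def aa (q : ℝ) (k : ℕ) : ℝ :=
  (-1)^k * q^(k^2) * ((1 - q^(4*k+1)) / (1 - q)) * (qPoch q (q^2) k)^3 / (qPoch (q^2) (q^2) k)^3

noncomputable def cc (q : ℝ) (n k : ℕ) : ℝ :=
  ∏ j ∈ Finset.range k, (q^(2*j) - q^(2*n)) / (q^(2*j) * (1 - q^(2*n+3+2*j)))

noncomputable def cp (q : ℝ) (n m : ℕ) : ℝ :=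
  ∏ j ∈ Finset.range m, (q^(2*j) - q^(2*n)) / (q^(2*j) * (1 - q^(2*n+5+2*j)))

noncomputable def FF (q : ℝ) (n : ℕ) : ℝ :=
  qPoch q (q^2) n * qPoch (q^3) (q^2) n / (qPoch (q^2) (q^2) n)^2

noncomputable def GG (q : ℝ) (n : ℕ) : ℕ → ℝ
  | 0 => 0
  | (m+1) => (-1)^m * q^(m^2+2*n+1) * (qPoch q (q^2) (m+1))^3 * cp q n m * FF q n /
      ((1-q) * (qPoch (q^2) (q^2) m)^3 * (1 - q^(2*n+2))^2)

section basic
variable {q : ℝ} (hq0 : 0 < q) (hq1 : q < 1)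

lemma one_sub_pow_pos (hq0 : 0 < q) (hq1 : q < 1) (m : ℕ) (hm : m ≠ 0) : 0 < 1 - q^m := by
  have := pow_lt_one₀ hq0.le hq1 hm
  linarith

lemma qPoch_pos {a r : ℝ} (ha0 : 0 ≤ a) (ha1 : a < 1) (hr0 : 0 ≤ r) (hr1 : r ≤ 1) (n : ℕ) :
    0 < qPoch a r n := by
  refine Finset.prod_pos fun k _ => ?_
  have h1 : a * r^k ≤ a * 1 := by
    have := pow_le_one₀ hr0 hr1 (n := k)
    nlinarith
  nlinarith

lemma qPoch_le_one {a r : ℝ} (ha0 : 0 ≤ a) (ha1 : a ≤ 1) (hr0 : 0 ≤ r) (hr1 : r ≤ 1) (n : ℕ) :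
    qPoch a r n ≤ 1 := by
  refine Finset.prod_le_one (fun k _ => ?_) (fun k _ => ?_)
  · have h1 : a * r^k ≤ 1 * 1 := by
      have := pow_le_one₀ hr0 hr1 (n := k)
      nlinarith
    linarith
  · nlinarith [mul_nonneg ha0 (pow_nonneg hr0 k)]

lemma qPoch_succ (a r : ℝ) (n : ℕ) : qPoch a r (n+1) = qPoch a r n * (1 - a * r^n) :=
  Finset.prod_range_succ _ _

lemma cp_succ (q : ℝ) (n m : ℕ) :
    cp q n (m+1) = cp q n m * ((q^(2*m) - q^(2*n)) / (q^(2*m) * (1 - q^(2*n+5+2*m)))) :=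
  Finset.prod_range_succ _ _

lemma cc_succ (q : ℝ) (n k : ℕ) :
    cc q n (k+1) = cc q n k * ((q^(2*k) - q^(2*n)) / (q^(2*k) * (1 - q^(2*n+3+2*k)))) :=
  Finset.prod_range_succ _ _

lemma cc_eq_zero (q : ℝ) {n k : ℕ} (h : n < k) : cc q n k = 0 := by
  apply Finset.prod_eq_zero (Finset.mem_range.2 h)
  simp

lemma cp_eq_zero (q : ℝ) {n m : ℕ} (h : n < m) : cp q n m = 0 := by
  apply Finset.prod_eq_zero (Finset.mem_range.2 h)
  simp

end basic

section ident
variable {q : ℝ}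

lemma R1 (hq0 : 0 < q) (hq1 : q < 1) (n m : ℕ) :
    cc q n (m+1) * (q^(2*m) * (1 - q^(2*n+3))) = cp q n m * (q^(2*m) - q^(2*n)) := by
  have hqk : ∀ j : ℕ, (q:ℝ)^j ≠ 0 := fun j => pow_ne_zero j hq0.ne'
  have h1 : ∀ m : ℕ, m ≠ 0 → (1:ℝ) - q^m ≠ 0 := fun m hm => (one_sub_pow_pos hq0 hq1 m hm).ne'
  induction m with
  | zero =>
    simp only [cc, cp, zero_add, Finset.prod_range_one, Finset.prod_range_zero, mul_zero,
      add_zero, pow_zero]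
    field_simp [h1 (2*n+3) (by omega)]
  | succ m ih =>
    have hA : q^(2*m) * (1 - q^(2*n+3)) ≠ 0 := mul_ne_zero (hqk _) (h1 _ (by omega))
    have hcc : cc q n (m+1) = cp q n m * (q^(2*m) - q^(2*n)) / (q^(2*m) * (1 - q^(2*n+3))) :=
      (eq_div_iff hA).2 ih
    rw [cc_succ, hcc, show 2*n+3+2*(m+1) = 2*n+5+2*m from by ring, cp_succ]
    have h2 : (1:ℝ) - q^(2*n+5+2*m) ≠ 0 := h1 _ (by omega)
    have h3 : (1:ℝ) - q^(2*n+3) ≠ 0 := h1 _ (by omega)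
    field_simp

lemma R3 (hq0 : 0 < q) (hq1 : q < 1) (n m : ℕ) :
    cc q (n+1) (m+1) * (1 - q^(2*n+5+2*m)) = cp q n m * (1 - q^(2*n+2)) := by
  have hqk : ∀ j : ℕ, (q:ℝ)^j ≠ 0 := fun j => pow_ne_zero j hq0.ne'
  have h1 : ∀ m : ℕ, m ≠ 0 → (1:ℝ) - q^m ≠ 0 := fun m hm => (one_sub_pow_pos hq0 hq1 m hm).ne'
  induction m with
  | zero =>
    simp only [cc, cp, zero_add, Finset.prod_range_one, Finset.prod_range_zero, mul_zero,
      add_zero, pow_zero]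
    rw [show 2*(n+1)+3 = 2*n+5 from by ring, show 2*(n+1) = 2*n+2 from by ring]
    field_simp [h1 (2*n+5) (by omega)]
  | succ m ih =>
    have hA : (1:ℝ) - q^(2*n+5+2*m) ≠ 0 := h1 _ (by omega)
    have hcc : cc q (n+1) (m+1) = cp q n m * (1 - q^(2*n+2)) / (1 - q^(2*n+5+2*m)) :=
      (eq_div_iff hA).2 ih
    rw [cc_succ, hcc, show 2*(n+1)+3+2*(m+1) = 2*n+5+2*(m+1) from by ring, cp_succ]
    have h2 : (1:ℝ) - q^(2*n+5+2*(m+1)) ≠ 0 := h1 _ (by omega)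
    field_simp
    ring

lemma FF_succ (hq0 : 0 < q) (hq1 : q < 1) (n : ℕ) :
    FF q (n+1) = FF q n * ((1 - q^(2*n+1)) * (1 - q^(2*n+3)) / (1 - q^(2*n+2))^2) := by
  have h1 : ∀ m : ℕ, m ≠ 0 → (1:ℝ) - q^m ≠ 0 := fun m hm => (one_sub_pow_pos hq0 hq1 m hm).ne'
  have hQ : qPoch (q^2) (q^2) n ≠ 0 :=
    (qPoch_pos (by positivity) (by nlinarith) (by positivity) (by nlinarith) n).ne'
  have hp1 : q*(q^2)^n = q^(2*n+1) := by ring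
  have hp2 : q^2*(q^2)^n = q^(2*n+2) := by ring
  have hp3 : q^3*(q^2)^n = q^(2*n+3) := by ring
  unfold FF
  rw [qPoch_succ, qPoch_succ, qPoch_succ, hp1, hp2, hp3]
  have h2 : (1:ℝ) - q^(2*n+2) ≠ 0 := h1 _ (by omega)
  field_simp

lemma dagger (hq0 : 0 < q) (hq1 : q < 1) (n k : ℕ) :
    aa q k * cc q (n+1) k * FF q n - aa q k * cc q n k * FF q (n+1)
      = GG q n (k+1) - GG q n k := by
  have h1 : ∀ m : ℕ, m ≠ 0 → (1:ℝ) - q^m ≠ 0 := fun m hm => (one_sub_pow_pos hq0 hq1 m hm).ne'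
  have e1q : (1:ℝ) - q ≠ 0 := by have := h1 1 one_ne_zero; simpa using this
  have e2 : (1:ℝ) - q^(2*n+2) ≠ 0 := h1 _ (by omega)
  rw [FF_succ hq0 hq1 n]
  cases k with
  | zero =>
    simp only [GG, aa, cc, cp, qPoch, zero_add, Finset.prod_range_zero, Finset.prod_range_one,
      pow_zero, mul_zero, add_zero, mul_one, one_mul, pow_one, sub_zero]
    field_simp
    ring
  | succ m =>
    have hq2m : (q:ℝ)^(2*m) ≠ 0 := pow_ne_zero _ hq0.ne'
    have e3 : (1:ℝ) - q^(2*n+3) ≠ 0 := h1 _ (by omega)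
    have e5m : (1:ℝ) - q^(2*n+5+2*m) ≠ 0 := h1 _ (by omega)
    have e2m2 : (1:ℝ) - q^(2*m+2) ≠ 0 := h1 _ (by omega)
    have eQ : qPoch (q^2) (q^2) m ≠ 0 :=
      (qPoch_pos (by positivity) (by nlinarith) (by positivity) (by nlinarith) m).ne'
    have hC0 : cc q n (m+1) = cp q n m * (q^(2*m) - q^(2*n)) / (q^(2*m) * (1 - q^(2*n+3))) :=
      (eq_div_iff (mul_ne_zero hq2m e3)).2 (R1 hq0 hq1 n m)
    have hC1 : cc q (n+1) (m+1) = cp q n m * (1 - q^(2*n+2)) / (1 - q^(2*n+5+2*m)) :=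
      (eq_div_iff e5m).2 (R3 hq0 hq1 n m)
    have hp1 : q*(q^2)^(m+1) = q^(2*m+3) := by ring
    have hp2 : q^2*(q^2)^m = q^(2*m+2) := by ring
    simp only [GG]
    rw [cp_succ q n m, hC0, hC1, aa, qPoch_succ q (q^2) (m+1), qPoch_succ (q^2) (q^2) m,
      hp1, hp2]
    field_simp
    ring

lemma FF_pos (hq0 : 0 < q) (hq1 : q < 1) (n : ℕ) : 0 < FF q n := by
  have h2 : (0:ℝ) ≤ q^2 := by positivity
  have h2' : q^2 < 1 := by nlinarith
  have h3 : (0:ℝ) ≤ q^3 := by positivity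
  have h3' : q^3 < 1 := by nlinarith
  exact div_pos (mul_pos (qPoch_pos hq0.le hq1 h2 h2'.le n)
    (qPoch_pos h3 h3' h2 h2'.le n)) (pow_pos (qPoch_pos h2 h2' h2 h2'.le n) 2)

lemma TT_eq (hq0 : 0 < q) (hq1 : q < 1) (n : ℕ) :
    ∑ k ∈ Finset.range (n+1), aa q k * cc q n k = FF q n := by
  have e1q : (1:ℝ) - q ≠ 0 := by nlinarith
  induction n with
  | zero =>
    simp only [zero_add, Finset.prod_range_zero, Finset.sum_range_one, aa, cc, FF, qPoch,
      pow_zero, one_mul, mul_one, pow_one]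
    field_simp
    norm_num
  | succ n ih =>
    have hF : FF q n ≠ 0 := (FF_pos hq0 hq1 n).ne'
    have tele : ∑ k ∈ Finset.range (n+2),
        (aa q k * cc q (n+1) k * FF q n - aa q k * cc q n k * FF q (n+1)) = 0 := by
      calc ∑ k ∈ Finset.range (n+2),
            (aa q k * cc q (n+1) k * FF q n - aa q k * cc q n k * FF q (n+1))
          = ∑ k ∈ Finset.range (n+2), (GG q n (k+1) - GG q n k) :=
            Finset.sum_congr rfl (fun k _ => dagger hq0 hq1 n k)
        _ = GG q n (n+2) - GG q n 0 := Finset.sum_range_sub _ _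
        _ = 0 := by
            have hz : GG q n (n+2) = 0 := by
              simp only [GG, cp_eq_zero q (Nat.lt_succ_self n)]
              simp
            rw [hz, show GG q n 0 = 0 from rfl, sub_zero]
    rw [Finset.sum_sub_distrib, ← Finset.sum_mul, ← Finset.sum_mul, sub_eq_zero] at tele
    have hsplit : ∑ k ∈ Finset.range (n+2), aa q k * cc q n k
        = ∑ k ∈ Finset.range (n+1), aa q k * cc q n k := by
      rw [Finset.sum_range_succ, cc_eq_zero q (Nat.lt_succ_self n)]
      simp
    rw [hsplit, ih] at tele
    have := mul_right_cancel₀ hF (tele.trans (mul_comm (FF q n) (FF q (n+1))))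
    exact this

section analysis
variable {q : ℝ}

noncomputable def bb (q : ℝ) (k : ℕ) : ℝ :=
  (1-q)⁻¹ * (((1-q^2)^3*(1-q^3))⁻¹)^k * q^(k^2)

lemma bb_nonneg (hq0 : 0 < q) (hq1 : q < 1) (k : ℕ) : 0 ≤ bb q k := by
  have h2 : (0:ℝ) < 1 - q^2 := one_sub_pow_pos hq0 hq1 2 (by omega)
  have h3 : (0:ℝ) < 1 - q^3 := one_sub_pow_pos hq0 hq1 3 (by omega)
  have h1 : (0:ℝ) < 1 - q := by nlinarith
  unfold bb
  positivity

lemma bb_succ (q : ℝ) (k : ℕ) :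
    bb q (k+1) = bb q k * (((1-q^2)^3*(1-q^3))⁻¹ * q^(2*k+1)) := by
  unfold bb
  rw [show (k+1)^2 = k^2 + (2*k+1) from by ring, pow_add, pow_succ]
  ring

lemma bb_summable (hq0 : 0 < q) (hq1 : q < 1) : Summable (bb q) := by
  have h2 : (0:ℝ) < 1 - q^2 := one_sub_pow_pos hq0 hq1 2 (by omega)
  have h3 : (0:ℝ) < 1 - q^3 := one_sub_pow_pos hq0 hq1 3 (by omega)
  apply summable_of_ratio_norm_eventually_le (r := 1/2) (by norm_num)
  have hq2 : (0:ℝ) ≤ q^2 := by positivity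
  have hq2' : q^2 < 1 := by nlinarith
  have htend := Filter.Tendsto.const_mul (((1-q^2)^3*(1-q^3))⁻¹ * q)
    (tendsto_pow_atTop_nhds_zero_of_lt_one hq2 hq2')
  rw [mul_zero] at htend
  have hev : ∀ᶠ k : ℕ in atTop, ((1-q^2)^3*(1-q^3))⁻¹ * q * (q^2)^k ≤ 1/2 :=
    htend.eventually (eventually_le_nhds (by norm_num))
  filter_upwards [hev] with k hk
  rw [Real.norm_eq_abs, Real.norm_eq_abs, abs_of_nonneg (bb_nonneg hq0 hq1 _),
    abs_of_nonneg (bb_nonneg hq0 hq1 _), bb_succ]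
  have hfac : ((1-q^2)^3*(1-q^3))⁻¹ * q^(2*k+1) = ((1-q^2)^3*(1-q^3))⁻¹ * q * (q^2)^k := by
    ring
  rw [hfac]
  have := bb_nonneg hq0 hq1 k
  nlinarith

lemma qPoch_lower (hq0 : 0 < q) (hq1 : q < 1) (k : ℕ) :
    (1-q^2)^k ≤ qPoch (q^2) (q^2) k := by
  have hrw : (1-q^2)^k = ∏ _j ∈ Finset.range k, (1-q^2) := by
    rw [Finset.prod_const, Finset.card_range]
  rw [hrw]
  refine Finset.prod_le_prod (fun j _ => (one_sub_pow_pos hq0 hq1 2 (by omega)).le)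
    (fun j _ => ?_)
  have h1 : q^2*(q^2)^j ≤ q^2 := by
    have := pow_le_one₀ (by positivity : (0:ℝ) ≤ q^2) (by nlinarith : q^2 ≤ 1) (n := j)
    nlinarith
  linarith

lemma abs_aa (hq0 : 0 < q) (hq1 : q < 1) (k : ℕ) :
    |aa q k| = q^(k^2) * ((1 - q^(4*k+1)) / (1 - q)) * (qPoch q (q^2) k)^3
      / (qPoch (q^2) (q^2) k)^3 := by
  have h2 : (0:ℝ) ≤ q^2 := by positivity
  have h2' : q^2 ≤ 1 := by nlinarith
  have hP := qPoch_pos hq0.le hq1 h2 h2' k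
  have hQ := qPoch_pos h2 (by nlinarith) h2 h2' k
  have h4 : (0:ℝ) < 1 - q^(4*k+1) := one_sub_pow_pos hq0 hq1 _ (by omega)
  have h1 : (0:ℝ) < 1 - q := by nlinarith
  have hrw : aa q k = (-1)^k * (q^(k^2) * ((1 - q^(4*k+1)) / (1 - q)) * (qPoch q (q^2) k)^3
      / (qPoch (q^2) (q^2) k)^3) := by
    unfold aa; ring
  rw [hrw, abs_mul, abs_pow, abs_neg, abs_one, one_pow, one_mul]
  exact abs_of_nonneg (div_nonneg (mul_nonneg (mul_nonneg (by positivity)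
    (div_nonneg h4.le h1.le)) (pow_nonneg hP.le 3)) (pow_nonneg hQ.le 3))

lemma aa_bound (hq0 : 0 < q) (hq1 : q < 1) (k : ℕ) :
    |aa q k| ≤ (1-q)⁻¹ * (((1-q^2)^3)⁻¹)^k * q^(k^2) := by
  have h2 : (0:ℝ) ≤ q^2 := by positivity
  have h2' : q^2 ≤ 1 := by nlinarith
  have h2s : (0:ℝ) < 1 - q^2 := one_sub_pow_pos hq0 hq1 2 (by omega)
  have hP := qPoch_pos hq0.le hq1 h2 h2' k
  have hP1 := qPoch_le_one hq0.le hq1.le h2 h2' (n := k)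
  have hQ := qPoch_pos h2 (by nlinarith) h2 h2' k
  have hQl := qPoch_lower hq0 hq1 k
  have h4 : (0:ℝ) < 1 - q^(4*k+1) := one_sub_pow_pos hq0 hq1 _ (by omega)
  have h1 : (0:ℝ) < 1 - q := by nlinarith
  rw [abs_aa hq0 hq1 k]
  have hdivle : (1 - q^(4*k+1)) / (1 - q) ≤ (1-q)⁻¹ := by
    rw [div_le_iff₀ h1, inv_mul_cancel₀ h1.ne']
    nlinarith [pow_pos hq0 (4*k+1)]
  have step1 : q^(k^2) * ((1 - q^(4*k+1)) / (1 - q)) * (qPoch q (q^2) k)^3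
      / (qPoch (q^2) (q^2) k)^3 ≤ q^(k^2) * (1-q)⁻¹ * 1 / ((1-q^2)^k)^3 := by
    apply div_le_div₀ (by positivity)
    · apply mul_le_mul
      · exact mul_le_mul le_rfl hdivle (by positivity) (by positivity)
      · exact pow_le_one₀ hP.le hP1
      · positivity
      · positivity
    · positivity
    · exact pow_le_pow_left₀ (by positivity) hQl 3
  refine step1.trans (le_of_eq ?_)
  rw [← pow_mul, ← inv_pow, ← pow_mul, show k*3 = 3*k from by ring]
  field_simp
  rw [← mul_pow, mul_one_div_cancel h2s.ne', one_pow]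

lemma cc_bound (hq0 : 0 < q) (hq1 : q < 1) (n k : ℕ) :
    |cc q n k| ≤ ((1-q^3)⁻¹)^k := by
  have h3 : (0:ℝ) < 1 - q^3 := one_sub_pow_pos hq0 hq1 3 (by omega)
  rcases le_or_gt k n with hkn | hkn
  · unfold cc
    rw [Finset.abs_prod]
    have hrw : ((1-q^3)⁻¹)^k = ∏ _j ∈ Finset.range k, (1-q^3)⁻¹ := by
      rw [Finset.prod_const, Finset.card_range]
    rw [hrw]
    refine Finset.prod_le_prod (fun j _ => abs_nonneg _) (fun j hj => ?_)
    have hjk : j < k := Finset.mem_range.1 hj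
    have hnum0 : (0:ℝ) ≤ q^(2*j) - q^(2*n) :=
      sub_nonneg.2 (pow_le_pow_of_le_one hq0.le hq1.le (by omega))
    have hbig : (0:ℝ) < 1 - q^(2*n+3+2*j) := one_sub_pow_pos hq0 hq1 _ (by omega)
    have hden : (0:ℝ) < q^(2*j) * (1 - q^(2*n+3+2*j)) := by positivity
    rw [abs_div, abs_of_nonneg hnum0, abs_of_nonneg hden.le]
    have h35 : q^(2*n+3+2*j) ≤ q^3 := pow_le_pow_of_le_one hq0.le hq1.le (by omega)
    have hd : q^(2*j)*(1-q^3) ≤ q^(2*j)*(1 - q^(2*n+3+2*j)) := by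
      apply mul_le_mul_of_nonneg_left (by linarith) (by positivity)
    have hstep : (q^(2*j) - q^(2*n))/(q^(2*j)*(1-q^(2*n+3+2*j)))
        ≤ q^(2*j)/(q^(2*j)*(1-q^3)) :=
      div_le_div₀ (by positivity) (by nlinarith [pow_pos hq0 (2*n)]) (by positivity) hd
    refine hstep.trans (le_of_eq ?_)
    field_simp
  · rw [cc_eq_zero q hkn, abs_zero]
    positivity

lemma aacc_bound (hq0 : 0 < q) (hq1 : q < 1) (n k : ℕ) :
    |aa q k * cc q n k| ≤ bb q k := by
  have h2s : (0:ℝ) < 1 - q^2 := one_sub_pow_pos hq0 hq1 2 (by omega)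
  have h3 : (0:ℝ) < 1 - q^3 := one_sub_pow_pos hq0 hq1 3 (by omega)
  have h1 : (0:ℝ) < 1 - q := by nlinarith
  rw [abs_mul]
  have h1b := aa_bound hq0 hq1 k
  have h2b := cc_bound hq0 hq1 n k
  have hb : bb q k = ((1-q)⁻¹ * (((1-q^2)^3)⁻¹)^k * q^(k^2)) * ((1-q^3)⁻¹)^k := by
    unfold bb
    rw [mul_inv, mul_pow]
    ring
  rw [hb]
  exact mul_le_mul h1b h2b (abs_nonneg _) (by positivity)

lemma aa_le_bb (hq0 : 0 < q) (hq1 : q < 1) (k : ℕ) : |aa q k| ≤ bb q k := by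
  have h2s : (0:ℝ) < 1 - q^2 := one_sub_pow_pos hq0 hq1 2 (by omega)
  have h3 : (0:ℝ) < 1 - q^3 := one_sub_pow_pos hq0 hq1 3 (by omega)
  have h1 : (0:ℝ) < 1 - q := by nlinarith
  refine (aa_bound hq0 hq1 k).trans ?_
  have hb : bb q k = ((1-q)⁻¹ * (((1-q^2)^3)⁻¹)^k * q^(k^2)) * ((1-q^3)⁻¹)^k := by
    unfold bb
    rw [mul_inv, mul_pow]
    ring
  rw [hb]
  have hbase : (1:ℝ) ≤ (1-q^3)⁻¹ := by
    have hc := mul_inv_cancel₀ h3.ne'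
    nlinarith [inv_pos.2 h3]
  have hone : (1:ℝ) ≤ ((1-q^3)⁻¹)^k := one_le_pow₀ hbase
  nlinarith [mul_pos (mul_pos (inv_pos.2 h1) (pow_pos (inv_pos.2 (pow_pos h2s 3)) k))
    (pow_pos hq0 (k^2))]


lemma cc_tendsto (hq0 : 0 < q) (hq1 : q < 1) (k : ℕ) :
    Tendsto (fun n => cc q n k) atTop (𝓝 1) := by
  have hq2 : (0:ℝ) ≤ q^2 := by positivity
  have hq2' : q^2 < 1 := by nlinarith
  have h0 : Tendsto (fun n : ℕ => ((q:ℝ)^2)^n) atTop (𝓝 0) :=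
    tendsto_pow_atTop_nhds_zero_of_lt_one hq2 hq2'
  have hmain : ∀ j : ℕ, Tendsto (fun n => (q^(2*j) - q^(2*n)) /
      (q^(2*j)*(1 - q^(2*n+3+2*j)))) atTop (𝓝 1) := by
    intro j
    have hj0 : (q:ℝ)^(2*j) ≠ 0 := pow_ne_zero _ hq0.ne'
    have hrw : ∀ n : ℕ, (q^(2*j) - q^(2*n)) / (q^(2*j)*(1 - q^(2*n+3+2*j)))
        = (q^(2*j) - (q^2)^n) / (q^(2*j)*(1 - q^(2*j+3)*(q^2)^n)) := by
      intro n
      rw [show ((q:ℝ)^2)^n = q^(2*n) from by ring,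
        show (q:ℝ)^(2*j+3)*q^(2*n) = q^(2*n+3+2*j) from by ring]
    have hnum : Tendsto (fun n : ℕ => q^(2*j) - (q^2)^n) atTop (𝓝 (q^(2*j) - 0)) :=
      tendsto_const_nhds.sub h0
    have hden : Tendsto (fun n : ℕ => q^(2*j)*(1 - q^(2*j+3)*(q^2)^n)) atTop
        (𝓝 (q^(2*j)*(1 - q^(2*j+3)*0))) :=
      tendsto_const_nhds.mul (tendsto_const_nhds.sub (tendsto_const_nhds.mul h0))
    have hdne : (q:ℝ)^(2*j)*(1 - q^(2*j+3)*0) ≠ 0 := by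
      simpa using hj0
    have hlim := hnum.div hden hdne
    have hval : ((q:ℝ)^(2*j) - 0) / (q^(2*j)*(1 - q^(2*j+3)*0)) = 1 := by
      field_simp
      simp
    rw [hval] at hlim
    exact Tendsto.congr (fun n => (hrw n).symm) hlim
  have h := tendsto_finset_prod (Finset.range k)
    (fun j (_ : j ∈ Finset.range k) => hmain j)
  simp only [Finset.prod_const_one] at h
  exact h

lemma tendsto_FF_tsum (hq0 : 0 < q) (hq1 : q < 1) :
    Tendsto (FF q) atTop (𝓝 (∑' k, aa q k)) := by
  have hab : ∀ k : ℕ, Tendsto (fun n => aa q k * cc q n k) atTop (𝓝 (aa q k)) := by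
    intro k
    have := (cc_tendsto hq0 hq1 k).const_mul (aa q k)
    simpa using this
  have htan : Tendsto (fun n => ∑' k, aa q k * cc q n k) atTop (𝓝 (∑' k, aa q k)) := by
    refine tendsto_tsum_of_dominated_convergence (bb_summable hq0 hq1) hab ?_
    exact Filter.Eventually.of_forall (fun n k => by
      rw [Real.norm_eq_abs]; exact aacc_bound hq0 hq1 n k)
  refine Tendsto.congr (fun n => ?_) htan
  rw [tsum_eq_sum (s := Finset.range (n+1)) (fun k hk => ?_)]
  · exact TT_eq hq0 hq1 n
  · rw [cc_eq_zero q (by simpa using Finset.mem_range.not.1 hk), mul_zero]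

lemma log_summable (hq0 : 0 < q) (hq1 : q < 1) {a : ℝ} (ha0 : 0 ≤ a) (ha1 : a < 1) :
    Summable (fun k : ℕ => Real.log (1 - a*(q^2)^k)) := by
  have hq2 : (0:ℝ) ≤ q^2 := by positivity
  have hq2' : q^2 < 1 := by nlinarith
  refine Summable.of_abs (Summable.of_nonneg_of_le (fun k => abs_nonneg _) (fun k => ?_)
    ((summable_geometric_of_lt_one hq2 hq2').mul_left (a/(1-a))))
  have hpk : (0:ℝ) ≤ (q^2)^k := by positivity
  have hpk1 : ((q:ℝ)^2)^k ≤ 1 := pow_le_one₀ hq2 hq2'.le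
  have ht0 : (0:ℝ) ≤ a*(q^2)^k := mul_nonneg ha0 hpk
  have ht1 : a*(q^2)^k ≤ a := by nlinarith
  have hpos : (0:ℝ) < 1 - a*(q^2)^k := by nlinarith
  have ha1' : (0:ℝ) < 1 - a := by linarith
  have hlog_nonpos : Real.log (1 - a*(q^2)^k) ≤ 0 :=
    Real.log_nonpos (by linarith) (by linarith)
  rw [abs_of_nonpos hlog_nonpos, ← Real.log_inv]
  have hlog := Real.log_le_sub_one_of_pos (inv_pos.2 hpos)
  have h1 : (1 - a*(q^2)^k)⁻¹ - 1 = (a*(q^2)^k)/(1 - a*(q^2)^k) := by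
    field_simp
    ring
  have h2 : (a*(q^2)^k)/(1 - a*(q^2)^k) ≤ (a*(q^2)^k)/(1-a) :=
    div_le_div_of_nonneg_left ht0 ha1' (by linarith)
  have h3 : (a*(q^2)^k)/(1-a) = a/(1-a) * (q^2)^k := by
    ring
  linarith

lemma hasProd_qPochInf (hq0 : 0 < q) (hq1 : q < 1) {a : ℝ} (ha0 : 0 ≤ a) (ha1 : a < 1) :
    HasProd (fun k : ℕ => 1 - a*(q^2)^k) (qPochInf a (q^2)) := by
  have hpos : ∀ k : ℕ, (0:ℝ) < 1 - a*(q^2)^k := by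
    intro k
    have hq2 : (0:ℝ) ≤ q^2 := by positivity
    have hpk1 : ((q:ℝ)^2)^k ≤ 1 := pow_le_one₀ hq2 (by nlinarith)
    have : a*(q^2)^k ≤ a := by nlinarith [pow_nonneg hq2 k]
    linarith
  exact (Real.multipliable_of_summable_log (f := fun k : ℕ => 1 - a*(q^2)^k)
    hpos (log_summable hq0 hq1 ha0 ha1)).hasProd

lemma qPochInf_pos (hq0 : 0 < q) (hq1 : q < 1) {a : ℝ} (ha0 : 0 ≤ a) (ha1 : a < 1) :
    0 < qPochInf a (q^2) := by
  have hpos : ∀ k : ℕ, (0:ℝ) < 1 - a*(q^2)^k := by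
    intro k
    have hq2 : (0:ℝ) ≤ q^2 := by positivity
    have hpk1 : ((q:ℝ)^2)^k ≤ 1 := pow_le_one₀ hq2 (by nlinarith)
    have : a*(q^2)^k ≤ a := by nlinarith [pow_nonneg hq2 k]
    linarith
  have h := Real.rexp_tsum_eq_tprod (f := fun k : ℕ => 1 - a*(q^2)^k) hpos
    (log_summable hq0 hq1 ha0 ha1)
  rw [show qPochInf a (q^2) = ∏' (n:ℕ), (1 - a*(q^2)^n) from rfl, ← h]
  exact Real.exp_pos _

lemma tendsto_qPoch (hq0 : 0 < q) (hq1 : q < 1) {a : ℝ} (ha0 : 0 ≤ a) (ha1 : a < 1) :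
    Tendsto (fun n => qPoch a (q^2) n) atTop (𝓝 (qPochInf a (q^2))) :=
  HasProd.tendsto_prod_nat (hasProd_qPochInf hq0 hq1 ha0 ha1)

end analysis
end ident
end GZ

theorem guo_zudilin_q_bauer (q : ℝ) (hq0 : 0 < q) (hq1 : q < 1) :
    HasSum (fun n : ℕ => (-1 : ℝ)^n * q^(n^2) * ((1 - q^(4*n+1)) / (1 - q))
        * (qPoch q (q^2) n)^3 / (qPoch (q^2) (q^2) n)^3)
      (qPochInf q (q^2) * qPochInf (q^3) (q^2) / (qPochInf (q^2) (q^2))^2) := by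
  have h2 : (0:ℝ) ≤ q^2 := by positivity
  have h2' : q^2 < 1 := by nlinarith
  have h3 : (0:ℝ) ≤ q^3 := by positivity
  have h3' : q^3 < 1 := by nlinarith
  have hPt := GZ.tendsto_qPoch hq0 hq1 hq0.le hq1
  have hRt := GZ.tendsto_qPoch hq0 hq1 h3 h3'
  have hQt := GZ.tendsto_qPoch hq0 hq1 h2 h2'
  have hQpos := GZ.qPochInf_pos hq0 hq1 h2 h2'
  have hFF : Tendsto (GZ.FF q) atTop
      (𝓝 (qPochInf q (q^2) * qPochInf (q^3) (q^2) / (qPochInf (q^2) (q^2))^2)) :=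
    (hPt.mul hRt).div (hQt.pow 2) (pow_ne_zero 2 hQpos.ne')
  have hts : ∑' k, GZ.aa q k
      = qPochInf q (q^2) * qPochInf (q^3) (q^2) / (qPochInf (q^2) (q^2))^2 :=
    tendsto_nhds_unique (GZ.tendsto_FF_tsum hq0 hq1) hFF
  have hsum : Summable (GZ.aa q) := Summable.of_norm_bounded (GZ.bb_summable hq0 hq1)
    (fun k => by rw [Real.norm_eq_abs]; exact GZ.aa_le_bb hq0 hq1 k)
  have hfinal := hsum.hasSum
  rw [hts] at hfinal
  exact hfinal
end
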